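/- arXiv:2411.07840 — 5 statements merged into one kernel-verified Lean document; each statement's English description precedes it below -/
import Mathlib

section
/- For every D > 0, sInf {H(φ) | φ : ℝ → ℂ admissible and M(φ) ≤ D} = D³ · sInf {H(φ) | φ : ℝ → ℂ admissible and M(φ) ≤ 1}, where sInf denotes the infimum of a set of real numbers (Real.sInf with its usual conventions). In other words, the constrained variational problem satisfies I(D) = D³·I(1). -/
open MeasureTheory Pointwise

/-- The mass `M(f) = ∫_ℝ |f(x)|² dx`. -/
noncomputable def M (f : ℝ → ℂ) : ℝ := ∫ x : ℝ, ‖f x‖ ^ 2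

/-- The focusing Hamiltonian `H(f) = (1/2)∫_ℝ |f'(x)|² dx − (1/4)∫_ℝ |f(x)|⁴ dx`. -/
noncomputable def H (f : ℝ → ℂ) : ℝ :=
  (1 / 2) * (∫ x : ℝ, ‖deriv f x‖ ^ 2) - (1 / 4) * (∫ x : ℝ, ‖f x‖ ^ 4)

/-- `f` is admissible if it is differentiable and `|f|²`, `|f|⁴`, `|f'|²` are integrable. -/
def Admissible (f : ℝ → ℂ) : Prop :=
  Differentiable ℝ f ∧ Integrable (fun x : ℝ => ‖f x‖ ^ 2) ∧
    Integrable (fun x : ℝ => ‖f x‖ ^ 4) ∧ Integrable (fun x : ℝ => ‖deriv f x‖ ^ 2)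

/-! The dilation `φ ↦ c φ(c ·)` with `c > 0` multiplies the mass by `c` and both terms of
the Hamiltonian by `c³`, and `c⁻¹` undoes it. So the energies attainable with mass `≤ c m` are exactly
`c³` times those attainable with mass `≤ m`, and a nonnegative factor passes through `sInf`. -/

section Dilation

variable {E : Type*} [NormedAddCommGroup E] [NormedSpace ℝ E]

def dilate (c : ℝ) (φ : ℝ → E) : ℝ → E := fun x => c • φ (c * x)

theorem hasDerivAt_dilate {c x : ℝ} {φ : ℝ → E} {φ' : E} (hφ : HasDerivAt φ φ' (c * x)) :
    HasDerivAt (dilate c φ) (c • c • φ') x := by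
  have hlin : HasDerivAt (fun x : ℝ => c * x) c x := by
    simpa using (hasDerivAt_id x).const_mul c
  exact (hφ.scomp x hlin).const_smul c

theorem deriv_dilate {c : ℝ} {φ : ℝ → E} (hφ : Differentiable ℝ φ) :
    deriv (dilate c φ) = c • dilate c (deriv φ) := by
  funext x
  exact (hasDerivAt_dilate (hφ (c * x)).hasDerivAt).deriv

theorem Differentiable.dilate {φ : ℝ → E} (hφ : Differentiable ℝ φ) (c : ℝ) :
    Differentiable ℝ (dilate c φ) :=
  fun x => (hasDerivAt_dilate (hφ (c * x)).hasDerivAt).differentiableAt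

theorem norm_dilate_pow {c : ℝ} (hc : 0 ≤ c) (φ : ℝ → E) (p : ℕ) (x : ℝ) :
    ‖dilate c φ x‖ ^ p = c ^ p * ‖φ (c * x)‖ ^ p := by
  rw [dilate, norm_smul, Real.norm_of_nonneg hc, mul_pow]

theorem integrable_norm_dilate_pow {c : ℝ} (hc : 0 < c) {φ : ℝ → E} {p : ℕ}
    (hφ : Integrable fun x => ‖φ x‖ ^ p) : Integrable fun x => ‖dilate c φ x‖ ^ p := by
  simp_rw [norm_dilate_pow hc.le]
  exact (hφ.comp_mul_left' hc.ne').const_mul _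

theorem integral_norm_dilate_pow {c : ℝ} (hc : 0 < c) (φ : ℝ → E) (p : ℕ) :
    ∫ x, ‖dilate c φ x‖ ^ p = c ^ p / c * ∫ x, ‖φ x‖ ^ p := by
  simp_rw [norm_dilate_pow hc.le]
  rw [integral_const_mul, Measure.integral_comp_mul_left (fun x => ‖φ x‖ ^ p) c,
    abs_of_pos (inv_pos.2 hc), smul_eq_mul, div_eq_mul_inv, mul_assoc]

end Dilation

theorem Admissible.dilate {c : ℝ} (hc : 0 < c) {φ : ℝ → ℂ} (hφ : Admissible φ) :
    Admissible (dilate c φ) := by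
  obtain ⟨hdiff, hmass, hquartic, hkinetic⟩ := hφ
  refine ⟨hdiff.dilate c, integrable_norm_dilate_pow hc hmass,
    integrable_norm_dilate_pow hc hquartic, ?_⟩
  simp_rw [deriv_dilate hdiff, Pi.smul_apply, norm_smul, mul_pow]
  exact (integrable_norm_dilate_pow hc hkinetic).const_mul _

theorem M_dilate {c : ℝ} (hc : 0 < c) (φ : ℝ → ℂ) : M (dilate c φ) = c * M φ := by
  rw [M, M, integral_norm_dilate_pow hc]
  field_simp

theorem H_dilate {c : ℝ} (hc : 0 < c) {φ : ℝ → ℂ} (hφ : Differentiable ℝ φ) :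
    H (dilate c φ) = c ^ 3 * H φ := by
  simp_rw [H, deriv_dilate hφ, Pi.smul_apply, norm_smul, mul_pow, integral_const_mul,
    integral_norm_dilate_pow hc, Real.norm_of_nonneg hc.le]
  field_simp

def energyLevels (m : ℝ) : Set ℝ := {y | ∃ φ : ℝ → ℂ, Admissible φ ∧ M φ ≤ m ∧ H φ = y}

theorem smul_energyLevels_subset {c : ℝ} (hc : 0 < c) (m : ℝ) :
    c ^ 3 • energyLevels m ⊆ energyLevels (c * m) := by
  rintro _ ⟨_, ⟨φ, hφ, hmass, rfl⟩, rfl⟩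
  refine ⟨dilate c φ, hφ.dilate hc, ?_, H_dilate hc hφ.1⟩
  rw [M_dilate hc]
  exact mul_le_mul_of_nonneg_left hmass hc.le

theorem energyLevels_mul {c : ℝ} (hc : 0 < c) (m : ℝ) :
    energyLevels (c * m) = c ^ 3 • energyLevels m := by
  refine subset_antisymm ?_ (smul_energyLevels_subset hc m)
  have h := smul_energyLevels_subset (inv_pos.2 hc) (c * m)
  rwa [inv_mul_cancel_left₀ hc.ne', inv_pow, Set.smul_set_subset_iff₀ (by positivity), inv_inv] at h

/-- The constrained variational problem `I(D) = inf {H(φ) : M(φ) ≤ D}` satisfies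
`I(D) = D³ · I(1)`. -/
theorem inf_scaling (D : ℝ) (hD : 0 < D) :
    sInf {y : ℝ | ∃ φ : ℝ → ℂ, Admissible φ ∧ M φ ≤ D ∧ H φ = y} =
      D ^ 3 * sInf {y : ℝ | ∃ φ : ℝ → ℂ, Admissible φ ∧ M φ ≤ 1 ∧ H φ = y} := by
  have h := energyLevels_mul hD 1
  rw [mul_one] at h
  change sInf (energyLevels D) = D ^ 3 * sInf (energyLevels 1)
  rw [h, Real.sInf_smul_of_nonneg (by positivity), smul_eq_mul]
end

section
/- Let λ ∈ ℝ and let Q : ℝ → ℂ be such that Q is differentiable on ℝ, deriv Q is differentiable on ℝ, and −deriv (deriv Q) x − (|Q(x)|²)·Q(x) = λ·Q(x) for every x ∈ ℝ. Assume moreover that Q(x) → 0 and deriv Q (x) → 0 as x → +∞ (limits along Filter.atTop), and that Q(x₀) ≠ 0 for some x₀ ∈ ℝ. Then λ < 0. -/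
/-!
Multiplying `Q'' = -(|Q|² + λ) Q` by `Q'` shows that
`½|Q'|² + ¼|Q|⁴ + (λ/2)|Q|²` is constant; the decay at `+∞` forces the constant to be `0`.
At a point where `Q ≠ 0` this gives `(λ/2)|Q|² = -½|Q'|² - ¼|Q|⁴ < 0`.
-/

open Filter Topology

section FirstIntegral

variable {E : Type*} [NormedAddCommGroup E] [InnerProductSpace ℝ E]

noncomputable def nlsFirstIntegral (lam : ℝ) (f : ℝ → E) (x : ℝ) : ℝ :=
  ‖deriv f x‖ ^ 2 / 2 + (‖f x‖ ^ 2) ^ 2 / 4 + lam / 2 * ‖f x‖ ^ 2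

theorem hasDerivAt_nlsFirstIntegral {lam : ℝ} {f : ℝ → E} {x : ℝ}
    (hf : DifferentiableAt ℝ f x) (hf' : DifferentiableAt ℝ (deriv f) x)
    (hode : deriv (deriv f) x = -(‖f x‖ ^ 2 + lam) • f x) :
    HasDerivAt (nlsFirstIntegral lam f) 0 x := by
  have hnorm : HasDerivAt (fun y => ‖f y‖ ^ 2) (2 * inner ℝ (f x) (deriv f x)) x :=
    hf.hasDerivAt.norm_sq
  have hnorm' : HasDerivAt (fun y => ‖deriv f y‖ ^ 2)
      (2 * inner ℝ (deriv f x) (deriv (deriv f) x)) x :=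
    hf'.hasDerivAt.norm_sq
  refine (((hnorm'.div_const 2).add ((hnorm.fun_pow 2).div_const 4)).add
    (hnorm.const_mul (lam / 2))).congr_deriv ?_
  rw [hode, inner_smul_right, real_inner_comm]
  ring

theorem tendsto_nlsFirstIntegral_zero {lam : ℝ} {f : ℝ → E}
    (hf : Tendsto f atTop (𝓝 0)) (hf' : Tendsto (deriv f) atTop (𝓝 0)) :
    Tendsto (nlsFirstIntegral lam f) atTop (𝓝 0) := by
  have hnorm := hf.norm.pow 2
  have hnorm' := hf'.norm.pow 2
  rw [norm_zero, zero_pow two_ne_zero] at hnorm hnorm'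
  have h := ((hnorm'.div_const 2).add ((hnorm.pow 2).div_const 4)).add (hnorm.const_mul (lam / 2))
  rwa [show (0 : ℝ) / 2 + 0 ^ 2 / 4 + lam / 2 * 0 = 0 by ring] at h

theorem neg_of_nlsFirstIntegral_eq_zero {lam : ℝ} {f : ℝ → E} {x : ℝ}
    (h : nlsFirstIntegral lam f x = 0) (hx : f x ≠ 0) : lam < 0 := by
  unfold nlsFirstIntegral at h
  have hpos : 0 < ‖f x‖ ^ 2 := by positivity
  nlinarith [sq_nonneg ‖deriv f x‖, sq_nonneg (‖f x‖ ^ 2)]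

end FirstIntegral

theorem eq_of_hasDerivAt_zero_of_tendsto_atTop {F : Type*} [NormedAddCommGroup F]
    [NormedSpace ℝ F] {g : ℝ → F} {c : F} (hg : ∀ x, HasDerivAt g 0 x)
    (hlim : Tendsto g atTop (𝓝 c)) (x : ℝ) : g x = c := by
  have hconst : g = fun _ => g x := funext fun y =>
    is_const_of_deriv_eq_zero (fun z => (hg z).differentiableAt) (fun z => (hg z).deriv) y x
  rw [hconst] at hlim
  exact tendsto_nhds_unique tendsto_const_nhds hlim

/-- The Lagrange multiplier of a nontrivial decaying solution of
`−Q'' − |Q|²Q = λQ` is negative. -/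
theorem lagrange_multiplier_neg (lam : ℝ) (Q : ℝ → ℂ)
    (hQ : Differentiable ℝ Q) (hQ' : Differentiable ℝ (deriv Q))
    (heq : ∀ x : ℝ, -deriv (deriv Q) x - ((‖Q x‖ ^ 2 : ℝ) : ℂ) * Q x = (lam : ℂ) * Q x)
    (hQlim : Tendsto Q atTop (nhds 0))
    (hQ'lim : Tendsto (deriv Q) atTop (nhds 0))
    (hne : ∃ x₀ : ℝ, Q x₀ ≠ 0) :
    lam < 0 := by
  obtain ⟨x₀, hx₀⟩ := hne
  have hode (x : ℝ) : deriv (deriv Q) x = (-(‖Q x‖ ^ 2 + lam) : ℝ) • Q x := by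
    rw [Complex.real_smul]
    have h := heq x
    push_cast at h ⊢
    linear_combination -h
  have hconserved := eq_of_hasDerivAt_zero_of_tendsto_atTop
    (fun x => hasDerivAt_nlsFirstIntegral (hQ x) (hQ' x) (hode x))
    (tendsto_nlsFirstIntegral_zero hQlim hQ'lim) x₀
  exact neg_of_nlsFirstIntegral_eq_zero hconserved hx₀
end

section
/- For every D > 0 there exists Q : ℝ → ℂ which is admissible, takes real and strictly positive values (Q(x).im = 0 and Q(x).re > 0 for all x ∈ ℝ), satisfies M(Q) = D, and is a minimizer: H(Q) ≤ H(φ) for every admissible φ : ℝ → ℂ with M(φ) ≤ D. -/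
/-!
Write `v = |φ|²` and let `w(r) = ∫_r^∞ v - ∫_{-∞}^r v`, so that `w' = -2v` and `w` runs
from `M(φ)` down to `-M(φ)`. Integrating `(w v)' = w v' - 2v²` over `ℝ` gives
`2∫|φ|⁴ = ∫ w v'`, and integrating `(-w³/6)' = w² v` gives `∫ w² v = M(φ)³/3`. Since
`|v'| ≤ 2|φ||φ'|`, the weighted AM-GM inequality yields `2∫|φ|⁴ ≤ t M(φ)³/3 + ∫|φ'|²/t` for every
`t > 0`, and `t = 1/4` gives `H(φ) ≥ -M(φ)³/96`. The rescaled hyperbolic secant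
`Q(x) = √2 c sech(c x)` with `c = D/4` has mass `D` and `H(Q) = -D³/96`, so it attains this bound.
-/

open MeasureTheory

open Real Set Filter Topology

namespace Real

theorem hasDerivAt_tanh (x : ℝ) : HasDerivAt tanh (cosh x ^ 2)⁻¹ x := by
  have h := (hasDerivAt_sinh x).div (hasDerivAt_cosh x) (cosh_pos x).ne'
  rw [show cosh x * cosh x - sinh x * sinh x = 1 by
    linear_combination cosh_sq_sub_sinh_sq x, one_div] at h
  exact h.congr_of_eventuallyEq (.of_forall tanh_eq_sinh_div_cosh)

theorem tanh_eq_one_sub_exp_neg_sq_div (x : ℝ) :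
    tanh x = (1 - exp (-x) ^ 2) / (1 + exp (-x) ^ 2) := by
  rw [tanh_eq, exp_neg]
  have := exp_pos x
  field_simp

theorem tendsto_tanh_atTop : Tendsto tanh atTop (𝓝 1) := by
  have h := tendsto_exp_neg_atTop_nhds_zero.pow 2
  have := (tendsto_const_nhds (x := (1 : ℝ)).sub h).div (tendsto_const_nhds (x := (1 : ℝ)).add h)
    (by norm_num)
  norm_num at this
  exact this.congr fun x => (tanh_eq_one_sub_exp_neg_sq_div x).symm

theorem tendsto_tanh_atBot : Tendsto tanh atBot (𝓝 (-1)) := by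
  have := (tendsto_tanh_atTop.comp tendsto_neg_atBot_atTop).neg
  simpa [Function.comp_def, tanh_neg] using this

theorem inv_cosh_sq_le (x : ℝ) : (cosh x ^ 2)⁻¹ ≤ (1 + x ^ 2)⁻¹ := by
  have h : |x| ≤ |sinh x| := by rw [abs_sinh]; exact self_le_sinh_iff.2 (abs_nonneg x)
  have hsq : x ^ 2 ≤ sinh x ^ 2 := sq_le_sq.2 h
  gcongr
  linarith [cosh_sq x]

theorem integrable_inv_cosh_sq : Integrable fun x => (cosh x ^ 2)⁻¹ :=
  integrable_inv_one_add_sq.mono' (by fun_prop) (.of_forall fun x => by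
    rw [norm_inv, norm_pow, norm_of_nonneg (cosh_pos x).le]; exact inv_cosh_sq_le x)

theorem integral_inv_cosh_sq : ∫ x, (cosh x ^ 2)⁻¹ = 2 := by
  rw [integral_of_hasDerivAt_of_tendsto hasDerivAt_tanh integrable_inv_cosh_sq tendsto_tanh_atBot
    tendsto_tanh_atTop]
  norm_num

theorem integrable_inv_cosh_pow_four : Integrable fun x => (cosh x ^ 4)⁻¹ :=
  integrable_inv_cosh_sq.mono' (by fun_prop) (.of_forall fun x => by
    rw [norm_inv, norm_pow, norm_of_nonneg (cosh_pos x).le]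
    exact inv_anti₀ (by positivity) (pow_le_pow_right₀ (one_le_cosh x) (by norm_num)))

theorem integral_inv_cosh_pow_four : ∫ x, (cosh x ^ 4)⁻¹ = 4 / 3 := by
  have hderiv (x : ℝ) : HasDerivAt (fun x => tanh x - tanh x ^ 3 / 3) (cosh x ^ 4)⁻¹ x := by
    refine ((hasDerivAt_tanh x).sub (((hasDerivAt_tanh x).pow 3).div_const 3)).congr_deriv ?_
    have := cosh_pos x
    rw [tanh_eq_sinh_div_cosh]
    push_cast
    field_simp
    exact cosh_sq_sub_sinh_sq x
  rw [integral_of_hasDerivAt_of_tendsto hderiv integrable_inv_cosh_pow_four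
    (tendsto_tanh_atBot.sub ((tendsto_tanh_atBot.pow 3).div_const 3))
    (tendsto_tanh_atTop.sub ((tendsto_tanh_atTop.pow 3).div_const 3))]
  norm_num

end Real

theorem two_mul_le_mul_sq_add_sq_div {t : ℝ} (ht : 0 < t) (a b : ℝ) :
    2 * a * b ≤ t * a ^ 2 + b ^ 2 / t := by
  rw [add_div' _ _ _ ht.ne', le_div_iff₀ ht]
  nlinarith [sq_nonneg (t * a - b)]

theorem hasDerivAt_integral_Iic {E : Type*} [NormedAddCommGroup E] [NormedSpace ℝ E]
    [CompleteSpace E] {f : ℝ → E} (hf : Continuous f) (hfi : Integrable f) (r : ℝ) :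
    HasDerivAt (fun r => ∫ x in Iic r, f x) (f r) r := by
  have h := (intervalIntegral.integral_hasDerivAt_right (hfi.intervalIntegrable (a := 0) (b := r))
    (hf.stronglyMeasurableAtFilter _ _) hf.continuousAt).const_add (∫ x in Iic 0, f x)
  refine h.congr_of_eventuallyEq (.of_forall fun s => ?_)
  dsimp only
  rw [← intervalIntegral.integral_Iic_sub_Iic hfi.integrableOn hfi.integrableOn]
  abel

noncomputable def balance (v : ℝ → ℝ) (r : ℝ) : ℝ := (∫ x, v x) - 2 * ∫ x in Iic r, v x

section Balance

variable {v : ℝ → ℝ}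

theorem hasDerivAt_balance (hv : Continuous v) (hvi : Integrable v) (r : ℝ) :
    HasDerivAt (balance v) (-(2 * v r)) r :=
  ((hasDerivAt_integral_Iic hv hvi r).const_mul 2).const_sub (∫ x, v x)

theorem tendsto_balance_atTop (hvi : Integrable v) :
    Tendsto (balance v) atTop (𝓝 (-∫ x, v x)) := by
  unfold balance
  have := ((aecover_Iic tendsto_id).integral_tendsto_of_countably_generated hvi).const_mul 2
  rw [show -∫ x, v x = (∫ x, v x) - 2 * ∫ x, v x by ring]
  exact this.const_sub _

theorem tendsto_balance_atBot : Tendsto (balance v) atBot (𝓝 (∫ x, v x)) := by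
  unfold balance
  simpa using ((tendsto_integral_Iic_zero tendsto_id).const_mul 2).const_sub (∫ x, v x)

theorem abs_balance_le (hv : 0 ≤ v) (hvi : Integrable v) (r : ℝ) :
    |balance v r| ≤ ∫ x, v x := by
  have h₀ : 0 ≤ ∫ x in Iic r, v x := setIntegral_nonneg measurableSet_Iic fun x _ => hv x
  have h₁ : ∫ x in Iic r, v x ≤ ∫ x, v x := setIntegral_le_integral hvi (.of_forall hv)
  rw [balance, abs_le]
  constructor <;> linarith

theorem continuous_balance (hv : Continuous v) (hvi : Integrable v) : Continuous (balance v) :=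
  continuous_iff_continuousAt.2 fun r => (hasDerivAt_balance hv hvi r).continuousAt

theorem integrable_balance_mul (hv : Continuous v) (hv₀ : 0 ≤ v) (hvi : Integrable v)
    {g : ℝ → ℝ} (hg : Integrable g) : Integrable fun r => balance v r * g r :=
  hg.bdd_mul (continuous_balance hv hvi).aestronglyMeasurable (.of_forall (abs_balance_le hv₀ hvi))

theorem integrable_balance_sq_mul (hv : Continuous v) (hv₀ : 0 ≤ v) (hvi : Integrable v) :
    Integrable fun r => balance v r ^ 2 * v r := by
  simpa only [sq, mul_assoc] using
    integrable_balance_mul hv hv₀ hvi (integrable_balance_mul hv hv₀ hvi hvi)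

theorem integral_balance_sq_mul (hv : Continuous v) (hv₀ : 0 ≤ v) (hvi : Integrable v) :
    ∫ r, balance v r ^ 2 * v r = (∫ x, v x) ^ 3 / 3 := by
  have hderiv (r : ℝ) : HasDerivAt (fun r => -(balance v r ^ 3 / 6)) (balance v r ^ 2 * v r) r :=
    (((hasDerivAt_balance hv hvi r).pow 3).div_const 6).neg.congr_deriv (by push_cast; ring)
  rw [integral_of_hasDerivAt_of_tendsto hderiv (integrable_balance_sq_mul hv hv₀ hvi)
    ((tendsto_balance_atBot.pow 3).div_const 6).neg
    (((tendsto_balance_atTop hvi).pow 3).div_const 6).neg]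
  ring

theorem integral_balance_mul_deriv {v' : ℝ → ℝ} (hv : ∀ x, HasDerivAt v (v' x) x) (hv₀ : 0 ≤ v)
    (hvi : Integrable v) (hv'i : Integrable v') (hv2 : Integrable fun x => v x ^ 2) :
    ∫ r, balance v r * v' r = 2 * ∫ r, v r ^ 2 := by
  have hvc : Continuous v := continuous_iff_continuousAt.2 fun x => (hv x).continuousAt
  rw [integral_mul_deriv_eq_deriv_mul_of_integrable (fun r _ => hasDerivAt_balance hvc hvi r)
    (fun r _ => hv r) (integrable_balance_mul hvc hv₀ hvi hv'i)
    ((hv2.const_mul 2).neg.congr (.of_forall fun r => by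
      simp only [Pi.mul_apply, Pi.neg_apply]; ring))
    (integrable_balance_mul hvc hv₀ hvi hvi), ← integral_const_mul, ← integral_neg]
  congr 1 with r
  ring

end Balance

theorem two_mul_integral_norm_pow_four_le {F : Type*} [NormedAddCommGroup F]
    [InnerProductSpace ℝ F] {φ : ℝ → F} (hφ : Differentiable ℝ φ)
    (h2 : Integrable fun x => ‖φ x‖ ^ 2) (h4 : Integrable fun x => ‖φ x‖ ^ 4)
    (hd : Integrable fun x => ‖deriv φ x‖ ^ 2) {t : ℝ} (ht : 0 < t) :
    2 * ∫ x, ‖φ x‖ ^ 4 ≤ t * (∫ x, ‖φ x‖ ^ 2) ^ 3 / 3 + (∫ x, ‖deriv φ x‖ ^ 2) / t := by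
  set v : ℝ → ℝ := fun x => ‖φ x‖ ^ 2
  set v' : ℝ → ℝ := fun x => 2 * inner ℝ (φ x) (deriv φ x)
  have hvc : Continuous v := hφ.continuous.norm.pow 2
  have hv₀ : 0 ≤ v := fun x => by positivity
  have hv (x : ℝ) : HasDerivAt v (v' x) x := (hφ x).hasDerivAt.norm_sq
  have hv' (x : ℝ) : |v' x| ≤ 2 * ‖φ x‖ * ‖deriv φ x‖ := by
    rw [abs_mul, abs_two, mul_assoc]
    gcongr
    exact abs_real_inner_le_norm _ _
  have hv'i : Integrable v' := by
    refine (h2.add hd).mono' ?_ (.of_forall fun x => (hv' x).trans ?_)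
    · rw [show v' = deriv v from funext fun x => (hv x).deriv.symm]
      exact (stronglyMeasurable_deriv v).aestronglyMeasurable
    · show 2 * ‖φ x‖ * ‖deriv φ x‖ ≤ ‖φ x‖ ^ 2 + ‖deriv φ x‖ ^ 2
      nlinarith [sq_nonneg (‖φ x‖ - ‖deriv φ x‖)]
  have hv2 : (fun x => v x ^ 2) = fun x => ‖φ x‖ ^ 4 := funext fun x => by ring
  have hamgm (r : ℝ) :
      balance v r * v' r ≤ t * (balance v r ^ 2 * v r) + ‖deriv φ r‖ ^ 2 / t := by
    calc balance v r * v' r ≤ |balance v r| * (2 * ‖φ r‖ * ‖deriv φ r‖) :=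
          (le_abs_self _).trans (by rw [abs_mul]; gcongr; exact hv' r)
      _ = 2 * (|balance v r| * ‖φ r‖) * ‖deriv φ r‖ := by ring
      _ ≤ t * (|balance v r| * ‖φ r‖) ^ 2 + ‖deriv φ r‖ ^ 2 / t :=
          two_mul_le_mul_sq_add_sq_div ht _ _
      _ = t * (balance v r ^ 2 * v r) + ‖deriv φ r‖ ^ 2 / t := by rw [mul_pow, sq_abs]
  have hbv := integrable_balance_sq_mul hvc hv₀ h2
  calc 2 * ∫ x, ‖φ x‖ ^ 4 = ∫ r, balance v r * v' r := by
        rw [integral_balance_mul_deriv hv hv₀ h2 hv'i (hv2 ▸ h4), hv2]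
    _ ≤ ∫ r, (t * (balance v r ^ 2 * v r) + ‖deriv φ r‖ ^ 2 / t) :=
        integral_mono (integrable_balance_mul hvc hv₀ h2 hv'i)
          ((hbv.const_mul t).add (hd.div_const t)) hamgm
    _ = t * (∫ x, ‖φ x‖ ^ 2) ^ 3 / 3 + (∫ x, ‖deriv φ x‖ ^ 2) / t := by
        rw [integral_add (hbv.const_mul t) (hd.div_const t), integral_const_mul, integral_div,
          integral_balance_sq_mul hvc hv₀ h2]
        ring

noncomputable def soliton (c x : ℝ) : ℝ := √2 * c / cosh (c * x)

section Soliton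

variable {c : ℝ}

theorem soliton_pos (hc : 0 < c) (x : ℝ) : 0 < soliton c x := by
  unfold soliton; positivity

theorem hasDerivAt_soliton (c x : ℝ) :
    HasDerivAt (soliton c) (-(c * tanh (c * x) * soliton c x)) x := by
  have h := (((hasDerivAt_id' x).const_mul c).cosh.inv (cosh_pos _).ne').const_mul (√2 * c)
  refine (h.congr_deriv ?_).congr_of_eventuallyEq (.of_forall fun y => div_eq_mul_inv _ _)
  rw [soliton, tanh_eq_sinh_div_cosh]
  have := cosh_pos (c * x)
  field_simp

theorem deriv_ofReal_soliton (c : ℝ) :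
    deriv (fun x => (soliton c x : ℂ)) = fun x => ((-(c * tanh (c * x) * soliton c x) : ℝ) : ℂ) :=
  funext fun x => (hasDerivAt_soliton c x).ofReal_comp.deriv

theorem soliton_sq (c x : ℝ) : soliton c x ^ 2 = 2 * c ^ 2 * (cosh (c * x) ^ 2)⁻¹ := by
  rw [soliton, div_pow, mul_pow, sq_sqrt zero_le_two, div_eq_mul_inv]

theorem norm_ofReal_soliton_sq (c x : ℝ) :
    ‖(soliton c x : ℂ)‖ ^ 2 = 2 * c ^ 2 * (cosh (c * x) ^ 2)⁻¹ := by
  rw [Complex.norm_real, norm_eq_abs, sq_abs, soliton_sq]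

theorem norm_ofReal_soliton_pow_four (c x : ℝ) :
    ‖(soliton c x : ℂ)‖ ^ 4 = 4 * c ^ 4 * (cosh (c * x) ^ 4)⁻¹ := by
  rw [show 4 = 2 * 2 by rfl, pow_mul, norm_ofReal_soliton_sq]
  ring

theorem norm_deriv_ofReal_soliton_sq (c x : ℝ) :
    ‖deriv (fun x => (soliton c x : ℂ)) x‖ ^ 2 =
      2 * c ^ 4 * ((cosh (c * x) ^ 2)⁻¹ - (cosh (c * x) ^ 4)⁻¹) := by
  rw [deriv_ofReal_soliton, Complex.norm_real, norm_eq_abs, sq_abs, neg_sq, mul_pow, soliton_sq,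
    tanh_eq_sinh_div_cosh]
  have := cosh_pos (c * x)
  field_simp
  rw [sinh_sq]

theorem admissible_soliton (hc : 0 < c) : Admissible fun x => (soliton c x : ℂ) := by
  refine ⟨fun x => (hasDerivAt_soliton c x).ofReal_comp.differentiableAt, ?_, ?_, ?_⟩
  · simp_rw [norm_ofReal_soliton_sq]
    exact (integrable_inv_cosh_sq.comp_mul_left' hc.ne').const_mul _
  · simp_rw [norm_ofReal_soliton_pow_four]
    exact (integrable_inv_cosh_pow_four.comp_mul_left' hc.ne').const_mul _
  · simp_rw [norm_deriv_ofReal_soliton_sq]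
    exact ((integrable_inv_cosh_sq.comp_mul_left' hc.ne').sub
      (integrable_inv_cosh_pow_four.comp_mul_left' hc.ne')).const_mul _

theorem M_soliton (hc : 0 < c) : M (fun x => (soliton c x : ℂ)) = 4 * c := by
  simp_rw [M, norm_ofReal_soliton_sq]
  rw [integral_const_mul, Measure.integral_comp_mul_left (fun y => (cosh y ^ 2)⁻¹),
    integral_inv_cosh_sq, abs_of_pos (inv_pos.2 hc), smul_eq_mul]
  field_simp
  ring

theorem H_soliton (hc : 0 < c) : H (fun x => (soliton c x : ℂ)) = -(2 / 3 * c ^ 3) := by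
  simp_rw [H, norm_ofReal_soliton_pow_four, norm_deriv_ofReal_soliton_sq]
  rw [integral_const_mul, integral_const_mul, integral_sub
    (integrable_inv_cosh_sq.comp_mul_left' hc.ne')
    (integrable_inv_cosh_pow_four.comp_mul_left' hc.ne'),
    Measure.integral_comp_mul_left (fun y => (cosh y ^ 2)⁻¹),
    Measure.integral_comp_mul_left (fun y => (cosh y ^ 4)⁻¹), integral_inv_cosh_sq,
    integral_inv_cosh_pow_four, abs_of_pos (inv_pos.2 hc), smul_eq_mul, smul_eq_mul]
  field_simp
  ring

end Soliton

theorem neg_mass_cube_div_le_H {φ : ℝ → ℂ} (hφ : Admissible φ) : -(M φ ^ 3 / 96) ≤ H φ := by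
  obtain ⟨hd, h2, h4, hd2⟩ := hφ
  have := two_mul_integral_norm_pow_four_le hd h2 h4 hd2 (t := 1 / 4) (by norm_num)
  unfold M H
  linarith

/-- Existence of a positive minimizer with full mass `D` for the constrained
variational problem `I(D) = inf {H(φ) : M(φ) ≤ D}`. -/
theorem exists_positive_minimizer (D : ℝ) (hD : 0 < D) :
    ∃ Q : ℝ → ℂ, Admissible Q ∧ (∀ x : ℝ, (Q x).im = 0 ∧ 0 < (Q x).re) ∧ M Q = D ∧
      ∀ φ : ℝ → ℂ, Admissible φ → M φ ≤ D → H Q ≤ H φ := by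
  have hc : 0 < D / 4 := by positivity
  refine ⟨fun x => (soliton (D / 4) x : ℂ), admissible_soliton hc,
    fun x => ⟨Complex.ofReal_im _, soliton_pos hc x⟩, by rw [M_soliton hc]; ring,
    fun φ hφ hMφ => ?_⟩
  have hM₀ : 0 ≤ M φ := integral_nonneg fun x => by positivity
  calc H (fun x => (soliton (D / 4) x : ℂ)) = -(D ^ 3 / 96) := by rw [H_soliton hc]; ring
    _ ≤ -(M φ ^ 3 / 96) := by
        have := pow_le_pow_left₀ hM₀ hMφ 3
        linarith
    _ ≤ H φ := neg_mass_cube_div_le_H hφ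
end

section
/- Let a > 0, b > 0 and m ≥ 0 with 2·a·m ≤ b². Define t⁺ := (−b + √(b² − 2·a·m))/a. Then (a/2)·(t⁺)² + b·t⁺ = −m and −m/b − 2·a·m²/b³ ≤ t⁺ ≤ −m/b. -/
/-- The small root `t⁺ = (−b + √(b² − 2am))/a` of `(a/2)t² + bt = −m` satisfies the
two-sided expansion `−m/b − 2am²/b³ ≤ t⁺ ≤ −m/b`. -/
theorem quadratic_root_value_and_bounds (a b m : ℝ) (ha : 0 < a) (hb : 0 < b)
    (hm : 0 ≤ m) (h : 2 * a * m ≤ b ^ 2) :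
    (a / 2) * ((-b + Real.sqrt (b ^ 2 - 2 * a * m)) / a) ^ 2
        + b * ((-b + Real.sqrt (b ^ 2 - 2 * a * m)) / a) = -m ∧
    -m / b - 2 * a * m ^ 2 / b ^ 3 ≤ (-b + Real.sqrt (b ^ 2 - 2 * a * m)) / a ∧
    (-b + Real.sqrt (b ^ 2 - 2 * a * m)) / a ≤ -m / b := by
  set s := Real.sqrt (b ^ 2 - 2 * a * m) with hs
  have hd : (0:ℝ) ≤ b ^ 2 - 2 * a * m := by linarith
  have hs2 : s ^ 2 = b ^ 2 - 2 * a * m := Real.sq_sqrt hd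
  have hs0 : 0 ≤ s := Real.sqrt_nonneg _
  have ha' : a ≠ 0 := ha.ne'
  have hb' : b ≠ 0 := hb.ne'
  refine ⟨?_, ?_, ?_⟩
  · field_simp
    ring_nf
    nlinarith [hs2]
  · rw [div_sub_div _ _ hb' (by positivity : b ^ 3 ≠ 0), div_le_div_iff₀ (by positivity) ha]
    have key : b^4 - a*m*b^2 - 2*a^2*m^2 ≤ s*b^3 := by
      rcases le_or_gt (b^4 - a*m*b^2 - 2*a^2*m^2) 0 with hc | hc
      · exact hc.trans (by positivity)
      · have h1 : (b^4 - a*m*b^2 - 2*a^2*m^2)^2 ≤ (s*b^3)^2 := by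
          have hs2b : s^2 * b^6 = (b^2 - 2*a*m) * b^6 := by rw [hs2]
          nlinarith [hs2b, mul_nonneg (mul_nonneg (sq_nonneg (a*m)) hd)
            (by positivity : (0:ℝ) ≤ 3*b^2 + 2*a*m)]
        have h2 : 0 ≤ s*b^3 := mul_nonneg hs0 (pow_nonneg hb.le 3)
        nlinarith [h1, h2, hc]
    nlinarith [mul_le_mul_of_nonneg_left key hb.le]
  · rw [div_le_div_iff₀ ha hb]
    nlinarith [hs2, hs0, sq_nonneg (b*s - (b^2 - a*m)), sq_nonneg (a*m)]
end

section
/- Let μ be a probability measure on a measurable space Ω, let N ∈ ℕ with N ≥ 3, let C ≥ 1, and let a : Fin N → Ω → ℝ be measurable functions with a i ω ≥ 0 for all i, ω. Assume that ∫ (a i)^r dμ ≤ C^r · r^{r/2} for every real r ≥ 1 and every i. Then for every real p ≥ 1, ∫ (⨆_i a i)^p dμ ≤ e · C^p · (p · Real.log N)^{p/2}, where e = exp 1. -/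
/-!
Bound the maximum by an `ℓ^{pq}` norm, `(maxᵢ aᵢ)^p ≤ (∑ᵢ aᵢ^{pq})^{1/q}`, move the power `1/q`
outside the integral by Jensen's inequality for the concave map `t ↦ t^{1/q}`, and apply the
moment bound with `r = pq` to each of the `N` summands. With `q = log N` the factor `N^{1/q}` is
`e`, while `(C^{pq} (pq)^{pq/2})^{1/q} = C^p (pq)^{p/2}`.
-/

open MeasureTheory
open scoped ENNReal

theorem lintegral_rpow_le_rpow_lintegral {α : Type*} [MeasurableSpace α] {μ : Measure α}
    [IsProbabilityMeasure μ] {f : α → ℝ≥0∞} (hf : AEMeasurable f μ) {s : ℝ} (hs₀ : 0 < s)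
    (hs₁ : s ≤ 1) : ∫⁻ x, f x ^ s ∂μ ≤ (∫⁻ x, f x ∂μ) ^ s := by
  -- `‖f ^ s‖₁ ≤ ‖f ^ s‖_{1/s}` on a probability space
  have h := eLpNorm'_le_eLpNorm'_of_exponent_le one_pos ((one_le_div hs₀).2 hs₁) μ
    (hf.pow_const s).aestronglyMeasurable
  simpa only [eLpNorm'_eq_lintegral_enorm, enorm_eq_self, ENNReal.rpow_one, div_one,
    one_div_one_div, ← ENNReal.rpow_mul, mul_one_div_cancel hs₀.ne'] using h

theorem Real.iSup_rpow_le_sum_rpow {ι : Type*} [Fintype ι] [Nonempty ι] {x : ι → ℝ}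
    (hx : ∀ i, 0 ≤ x i) (r : ℝ) : (⨆ i, x i) ^ r ≤ ∑ i, x i ^ r := by
  obtain ⟨i₀, hi₀⟩ := exists_eq_ciSup_of_finite (f := x)
  rw [← hi₀]
  exact Finset.single_le_sum (fun i _ => Real.rpow_nonneg (hx i) r) (Finset.mem_univ i₀)

theorem ofReal_iSup_rpow_le_sum_rpow {ι : Type*} [Fintype ι] [Nonempty ι] {x : ι → ℝ}
    (hx : ∀ i, 0 ≤ x i) {p q : ℝ} (hq : 0 < q) :
    ENNReal.ofReal ((⨆ i, x i) ^ p) ≤ (∑ i, ENNReal.ofReal (x i ^ (p * q))) ^ q⁻¹ := by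
  have hsup : 0 ≤ ⨆ i, x i := Real.iSup_nonneg hx
  rw [← ENNReal.ofReal_sum_of_nonneg fun i _ => Real.rpow_nonneg (hx i) _,
    ENNReal.ofReal_rpow_of_nonneg (Finset.sum_nonneg fun i _ => Real.rpow_nonneg (hx i) _)
      (inv_nonneg.2 hq.le)]
  refine ENNReal.ofReal_le_ofReal ?_
  calc (⨆ i, x i) ^ p = ((⨆ i, x i) ^ (p * q)) ^ q⁻¹ := by
        rw [← Real.rpow_mul hsup, mul_inv_cancel_right₀ hq.ne']
    _ ≤ (∑ i, x i ^ (p * q)) ^ q⁻¹ := by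
        gcongr
        exact Real.iSup_rpow_le_sum_rpow hx (p * q)

theorem lintegral_iSup_rpow_le {Ω ι : Type*} [MeasurableSpace Ω] {μ : Measure Ω}
    [IsProbabilityMeasure μ] [Fintype ι] [Nonempty ι] {a : ι → Ω → ℝ}
    (hmeas : ∀ i, AEMeasurable (a i) μ) (hpos : ∀ i ω, 0 ≤ a i ω) {p q : ℝ} (hq : 1 ≤ q) :
    ∫⁻ ω, ENNReal.ofReal ((⨆ i, a i ω) ^ p) ∂μ
      ≤ (∑ i, ∫⁻ ω, ENNReal.ofReal (a i ω ^ (p * q)) ∂μ) ^ q⁻¹ := by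
  have hq₀ : 0 < q := by linarith
  have hmeas' : ∀ i ∈ Finset.univ, AEMeasurable (fun ω => ENNReal.ofReal (a i ω ^ (p * q))) μ :=
    fun i _ => ((hmeas i).pow_const _).ennreal_ofReal
  calc ∫⁻ ω, ENNReal.ofReal ((⨆ i, a i ω) ^ p) ∂μ
      ≤ ∫⁻ ω, (∑ i, ENNReal.ofReal (a i ω ^ (p * q))) ^ q⁻¹ ∂μ :=
        lintegral_mono fun ω => ofReal_iSup_rpow_le_sum_rpow (hpos · ω) hq₀
    _ ≤ (∫⁻ ω, ∑ i, ENNReal.ofReal (a i ω ^ (p * q)) ∂μ) ^ q⁻¹ :=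
        lintegral_rpow_le_rpow_lintegral (Finset.aemeasurable_fun_sum _ hmeas')
          (inv_pos.2 hq₀) (inv_le_one_of_one_le₀ hq)
    _ = _ := by rw [lintegral_finsetSum' _ hmeas']

theorem one_le_log_of_three_le {x : ℝ} (hx : 3 ≤ x) : 1 ≤ Real.log x := by
  have := Real.log_three_gt_d9
  have := Real.log_le_log (by norm_num) hx
  linarith

/-- Maximal moment estimate: uniform moment bounds `∫ aᵢ^r ≤ C^r·r^{r/2}` for `N ≥ 3`
nonnegative random variables imply
`∫ (max_i aᵢ)^p ≤ e·C^p·(p·log N)^{p/2}` for every `p ≥ 1`. -/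
theorem max_moment_bound {Ω : Type*} [MeasurableSpace Ω] (μ : Measure Ω)
    [IsProbabilityMeasure μ] (N : ℕ) (hN : 3 ≤ N) (C : ℝ) (hC : 1 ≤ C)
    (a : Fin N → Ω → ℝ) (hmeas : ∀ i, Measurable (a i)) (hpos : ∀ i ω, 0 ≤ a i ω)
    (hmom : ∀ r : ℝ, 1 ≤ r → ∀ i,
      (∫⁻ ω, ENNReal.ofReal (a i ω ^ r) ∂μ) ≤ ENNReal.ofReal (C ^ r * r ^ (r / 2))) :
    ∀ p : ℝ, 1 ≤ p →
      (∫⁻ ω, ENNReal.ofReal ((⨆ i, a i ω) ^ p) ∂μ)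
        ≤ ENNReal.ofReal (Real.exp 1 * C ^ p * (p * Real.log (N : ℝ)) ^ (p / 2)) := by
  intro p hp
  have : Nonempty (Fin N) := ⟨⟨0, by omega⟩⟩
  set q := Real.log N
  have hN₀ : (0 : ℝ) < N := by positivity
  have hq : 1 ≤ q := one_le_log_of_three_le (by exact_mod_cast hN)
  have hq₀ : 0 < q := by linarith
  have hpq : 1 ≤ p * q := one_le_mul_of_one_le_of_one_le hp hq
  set M := C ^ (p * q) * (p * q) ^ (p * q / 2)
  have hsum : ∑ i, ∫⁻ ω, ENNReal.ofReal (a i ω ^ (p * q)) ∂μ ≤ ENNReal.ofReal (N * M) := by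
    calc ∑ i, ∫⁻ ω, ENNReal.ofReal (a i ω ^ (p * q)) ∂μ
        ≤ ∑ _i : Fin N, ENNReal.ofReal M := Finset.sum_le_sum fun i _ => hmom _ hpq i
      _ = ENNReal.ofReal (N * M) := by
        rw [Finset.sum_const, Finset.card_univ, Fintype.card_fin, nsmul_eq_mul,
          ENNReal.ofReal_mul hN₀.le, ENNReal.ofReal_natCast]
  have hNM : (N * M) ^ q⁻¹ = Real.exp 1 * C ^ p * (p * q) ^ (p / 2) := by
    have hC₀ : 0 ≤ C := by linarith
    rw [Real.mul_rpow hN₀.le (by positivity), Real.mul_rpow (by positivity) (by positivity),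
      Real.rpow_inv_log hN₀ (by norm_cast; omega), ← Real.rpow_mul hC₀,
      ← Real.rpow_mul (by positivity), mul_inv_cancel_right₀ hq₀.ne', mul_assoc]
    congr 3
    field_simp
  calc ∫⁻ ω, ENNReal.ofReal ((⨆ i, a i ω) ^ p) ∂μ
      ≤ (∑ i, ∫⁻ ω, ENNReal.ofReal (a i ω ^ (p * q)) ∂μ) ^ q⁻¹ :=
        lintegral_iSup_rpow_le (fun i => (hmeas i).aemeasurable) hpos hq
    _ ≤ ENNReal.ofReal (N * M) ^ q⁻¹ := by gcongr
    _ = _ := by rw [ENNReal.ofReal_rpow_of_nonneg (by positivity) (by positivity), hNM]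
end
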